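/- arXiv:2504.19841 — 2 statements merged into one kernel-verified Lean document; each statement's English description precedes it below -/
import Mathlib

section
/- Let η₁, …, η_{N₁} be independent real random variables, each symmetric about zero (η_j and −η_j identically distributed), let c ∈ ℝ, and set τ̂_j = c + η_j for j = 1, …, N₁. Define the sign-change p-value p̂ = 2^{−N₁} Σ_{g∈{−1,1}^{N₁}} 1{ |(1/N₁) Σ_j g_j (τ̂_j − c)| ≥ |(1/N₁) Σ_j (τ̂_j − c)| }. Then for every α ∈ [0, 1], P(p̂ ≤ α) ≤ α. -/
/-!
Sign changes form a finite group `G` acting on the data, and independence plus symmetry make the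
joint law of the `η_j` invariant under it, so `p̂ ≤ α` has the same probability for the data as
for every sign-changed copy `g • η`. Averaging over `g` gives
`|G| · P(p̂ ≤ α) = E #{g | p(g • η) ≤ α}`, and deterministically at most `α |G|` points of an
orbit have p-value `≤ α`: among them, the one with the smallest statistic already counts all of
them in its own p-value.
-/

open MeasureTheory ProbabilityTheory Finset
open scoped ProbabilityTheory

theorem card_filter_card_ge_le {ι β : Type*} [Fintype ι] [LinearOrder β] (t : ι → β) {k : ℝ}
    (hk : 0 ≤ k) : (#{i | (#{j | t i ≤ t j} : ℝ) ≤ k} : ℝ) ≤ k := by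
  classical
  set A : Finset ι := {i | (#{j | t i ≤ t j} : ℝ) ≤ k}
  rcases A.eq_empty_or_nonempty with hA | hA
  · simpa [hA] using hk
  obtain ⟨i₀, hi₀, hmin⟩ := A.exists_min_image t hA
  calc (#A : ℝ) ≤ #{j | t i₀ ≤ t j} := by
        exact_mod_cast card_le_card fun i hi => by simpa using hmin i hi
    _ ≤ k := (mem_filter.1 hi₀).2

section RandomizationTest

variable (G : Type*) {X : Type*} [Group G] [Fintype G] [MulAction G X]

noncomputable def randomizationPValue (T : X → ℝ) (x : X) : ℝ :=
  (#{g : G | T x ≤ T (g • x)} : ℝ) / Fintype.card G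

variable {G}

theorem randomizationPValue_smul (T : X → ℝ) (h : G) (x : X) :
    randomizationPValue G T (h • x) =
      (#{g : G | T (h • x) ≤ T (g • x)} : ℝ) / Fintype.card G := by
  rw [randomizationPValue]
  congr 2
  exact card_equiv (Equiv.mulRight h) fun g => by simp [mul_smul]

theorem card_randomizationPValue_smul_le (T : X → ℝ) (x : X) {α : ℝ} (hα : 0 ≤ α) :
    (#{h : G | randomizationPValue G T (h • x) ≤ α} : ℝ) ≤ α * Fintype.card G := by
  have hG : (0 : ℝ) < Fintype.card G := by exact_mod_cast Fintype.card_pos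
  simp_rw [randomizationPValue_smul, div_le_iff₀ hG]
  exact card_filter_card_ge_le (fun h => T (h • x)) (by positivity)

variable [MeasurableSpace X] [MeasurableConstSMul G X]

theorem measurable_randomizationPValue {T : X → ℝ} (hT : Measurable T) :
    Measurable (randomizationPValue G T) := by
  unfold randomizationPValue
  simp_rw [card_filter]
  push_cast
  refine Measurable.div_const (Finset.measurable_sum _ fun g _ => ?_) _
  exact Measurable.ite (measurableSet_le hT (hT.comp (measurable_const_smul g)))
    measurable_const measurable_const

theorem measure_randomizationPValue_le {T : X → ℝ} (hT : Measurable T) (μ : Measure X)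
    [SMulInvariantMeasure G X μ] {α : ℝ} (hα : 0 ≤ α) :
    μ {x | randomizationPValue G T x ≤ α} ≤ ENNReal.ofReal α * μ Set.univ := by
  set S := {x | randomizationPValue G T x ≤ α}
  have hS : MeasurableSet S :=
    measurableSet_le (measurable_randomizationPValue hT) measurable_const
  have hG : (Fintype.card G : ENNReal) ≠ 0 := by exact_mod_cast Fintype.card_ne_zero
  have hpointwise (x : X) :
      ∑ h : G, ((h • ·) ⁻¹' S).indicator 1 x ≤ ENNReal.ofReal (α * Fintype.card G) := by
    classical
    simp only [Set.indicator_apply, Set.mem_preimage, Pi.one_apply, sum_boole,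
      ← ENNReal.ofReal_natCast]
    exact ENNReal.ofReal_le_ofReal (card_randomizationPValue_smul_le T x hα)
  refine (ENNReal.mul_le_mul_iff_right hG (ENNReal.natCast_ne_top _)).mp ?_
  calc (Fintype.card G : ENNReal) * μ S = ∑ h : G, μ ((h • ·) ⁻¹' S) := by
        simp [measure_preimage_smul]
    _ = ∫⁻ x, ∑ h : G, ((h • ·) ⁻¹' S).indicator 1 x ∂μ := by
        rw [lintegral_finsetSum _ fun h _ =>
          measurable_one.indicator (hS.preimage (measurable_const_smul h))]
        simp_rw [lintegral_indicator_one (hS.preimage (measurable_const_smul _))]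
    _ ≤ ∫⁻ _, ENNReal.ofReal (α * Fintype.card G) ∂μ := lintegral_mono hpointwise
    _ = Fintype.card G * (ENNReal.ofReal α * μ Set.univ) := by
        rw [lintegral_const, ENNReal.ofReal_mul hα, ENNReal.ofReal_natCast]; ring

end RandomizationTest

section SignChange

instance Pi.instMeasurableConstSMul' {ι : Type*} {M α : ι → Type*} [∀ i, SMul (M i) (α i)]
    [∀ i, MeasurableSpace (α i)] [∀ i, MeasurableConstSMul (M i) (α i)] :
    MeasurableConstSMul (∀ i, M i) (∀ i, α i) where
  measurable_const_smul g := measurable_pi_iff.2 fun i => (measurable_pi_apply i).const_smul (g i)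

theorem measurePreserving_units_int_smul {E : Type*} [AddCommGroup E] [MeasurableSpace E]
    [MeasurableNeg E] (ν : Measure E) [ν.IsNegInvariant] (u : ℤˣ) :
    MeasurePreserving (u • · : E → E) ν ν := by
  rcases Int.units_eq_one_or u with rfl | rfl
  · simp only [one_smul]
    exact MeasurePreserving.id ν
  · simpa [Units.smul_def] using Measure.measurePreserving_neg ν

instance smulInvariantMeasure_pi_units_int {ι E : Type*} [Fintype ι] [AddCommGroup E]
    [MeasurableSpace E] [MeasurableNeg E] (ν : ι → Measure E) [∀ i, SigmaFinite (ν i)]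
    [∀ i, (ν i).IsNegInvariant] : SMulInvariantMeasure (ι → ℤˣ) (ι → E) (Measure.pi ν) where
  measure_preimage_smul g _ hs :=
    (measurePreserving_pi ν ν fun i => measurePreserving_units_int_smul (ν i) (g i)
      ).measure_preimage hs.nullMeasurableSet

theorem randomizationPValue_units_int_eq {ι : Type*} [Fintype ι] [DecidableEq ι]
    (T : (ι → ℝ) → ℝ) (x : ι → ℝ) :
    randomizationPValue (ι → ℤˣ) T x = 1 / 2 ^ Fintype.card ι * ∑ g : ι → Bool,
      if T x ≤ T (fun j => (if g j then (1 : ℝ) else -1) * x j) then 1 else 0 := by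
  have hsign : Function.Bijective (fun b : Bool => if b then (1 : ℤˣ) else -1) := by decide
  rw [randomizationPValue, ← sum_boole, one_div_mul_eq_div, Fintype.card_pi]
  simp only [Fintype.card_units_int, prod_const, card_univ]
  push_cast
  congr 1
  refine (Fintype.sum_bijective _ hsign.comp_left _ _ fun g => ?_).symm
  congr 3
  ext j
  by_cases h : g j <;> simp [h, Units.smul_def]

end SignChange

theorem stmt5_general {Ω : Type*} [MeasureSpace Ω] [IsProbabilityMeasure (ℙ : Measure Ω)]
    {N₁ : ℕ}
    (η : Fin N₁ → Ω → ℝ)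
    (hmeas : ∀ j, Measurable (η j))
    (hindep : iIndepFun η ℙ)
    (hsym : ∀ j, Measure.map (η j) ℙ = Measure.map (fun ω => -(η j ω)) ℙ)
    (c : ℝ) (τhat : Fin N₁ → Ω → ℝ) (hτ : ∀ j ω, τhat j ω = c + η j ω)
    (phat : Ω → ℝ)
    (hp : ∀ ω, phat ω =
      (1 / ((2 : ℝ) ^ N₁)) * ∑ g : Fin N₁ → Bool,
        if |(1 / (N₁ : ℝ)) * ∑ j, (τhat j ω - c)|
            ≤ |(1 / (N₁ : ℝ)) * ∑ j, (if g j then (1 : ℝ) else -1) * (τhat j ω - c)|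
        then 1 else 0) :
    ∀ α ∈ Set.Icc (0 : ℝ) 1, ℙ {ω | phat ω ≤ α} ≤ ENNReal.ofReal α := by
  rintro α ⟨hα, -⟩
  set T : (Fin N₁ → ℝ) → ℝ := fun x => |(1 / (N₁ : ℝ)) * ∑ j, x j|
  have hT : Measurable T := by fun_prop
  set X : Ω → Fin N₁ → ℝ := fun ω j => η j ω
  have hX : Measurable X := measurable_pi_lambda _ hmeas
  have hphat : phat = randomizationPValue (Fin N₁ → ℤˣ) T ∘ X := by
    ext ω
    rw [hp, Function.comp_apply, randomizationPValue_units_int_eq, Fintype.card_fin]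
    simp only [hτ, add_sub_cancel_left, T, X]
  have hlaw : Measure.map X ℙ = Measure.pi fun j => Measure.map (η j) ℙ :=
    (iIndepFun_iff_map_fun_eq_pi_map fun j => (hmeas j).aemeasurable).1 hindep
  have hneg (j : Fin N₁) : (Measure.map (η j) ℙ).IsNegInvariant :=
    ⟨by rw [Measure.neg, Measure.map_map measurable_neg (hmeas j), hsym j]; rfl⟩
  calc ℙ {ω | phat ω ≤ α}
      = Measure.map X ℙ {x | randomizationPValue (Fin N₁ → ℤˣ) T x ≤ α} := by
        rw [Measure.map_apply hX (measurableSet_le (measurable_randomizationPValue hT)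
          measurable_const), hphat]
        rfl
    _ ≤ ENNReal.ofReal α * Measure.map X ℙ Set.univ := by
        rw [hlaw]
        exact measure_randomizationPValue_le hT _ hα
    _ = ENNReal.ofReal α := by
        rw [Measure.map_apply hX MeasurableSet.univ]
        simp

/-- finite-sample size control of the sign-changes randomization test:
if `τ̂_j = c + η_j` with `η_j` independent and symmetric about zero, then the
sign-change p-value `p̂ = 2^{−N₁} ∑_{g∈{−1,1}^{N₁}} 1{|N₁⁻¹ ∑ g_j(τ̂_j−c)| ≥ |N₁⁻¹ ∑ (τ̂_j−c)|}`
satisfies `P(p̂ ≤ α) ≤ α`.  (Sign vectors are enumerated by `Fin N₁ → Bool`,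
with `true ↦ 1` and `false ↦ −1`.) -/
theorem stmt5 {Ω : Type*} [MeasureSpace Ω] [IsProbabilityMeasure (ℙ : Measure Ω)]
    {N₁ : ℕ} (hN₁ : 0 < N₁)
    (η : Fin N₁ → Ω → ℝ)
    (hmeas : ∀ j, Measurable (η j))
    (hindep : iIndepFun η ℙ)
    (hsym : ∀ j, Measure.map (η j) ℙ = Measure.map (fun ω => -(η j ω)) ℙ)
    (c : ℝ) (τhat : Fin N₁ → Ω → ℝ) (hτ : ∀ j ω, τhat j ω = c + η j ω)
    (phat : Ω → ℝ)
    (hp : ∀ ω, phat ω =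
      (1 / ((2 : ℝ) ^ N₁)) * ∑ g : Fin N₁ → Bool,
        if |(1 / (N₁ : ℝ)) * ∑ j, (τhat j ω - c)|
            ≤ |(1 / (N₁ : ℝ)) * ∑ j, (if g j then (1 : ℝ) else -1) * (τhat j ω - c)|
        then 1 else 0) :
    ∀ α ∈ Set.Icc (0 : ℝ) 1, ℙ {ω | phat ω ≤ α} ≤ ENNReal.ofReal α :=
  stmt5_general η hmeas hindep hsym c τhat hτ phat hp
end

section
/- Let τ* ∈ ℝ, let W₁ be a real random variable, and let (W_j)_{j≥2} be i.i.d. integrable real random variables with E[W_j] = 0. For each N₀ ≥ 1 define τ̂_{N₀} = τ* + W₁ − (1/N₀) Σ_{j=2}^{N₀+1} W_j. Then τ̂_{N₀} → τ* + W₁ in probability as N₀ → ∞. In particular, if P(W₁ = 0) < 1, the estimator τ̂_{N₀} is not consistent for τ*: it does not converge in probability to τ*. -/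
/-!
The estimation error `τ̂_{N₀} − (τ* + W₁)` is minus the average of the `N₀` control errors,
which tends to `0` in probability by the law of large numbers. Limits in probability are almost
surely unique, so `τ̂_{N₀} → τ*` in probability would force `W₁ = 0` almost surely.
-/

open MeasureTheory ProbabilityTheory Filter Topology Finset

lemma MeasureTheory.tendstoInMeasure_iff_lt_abs_sub {α ι : Type*} {m : MeasurableSpace α}
    {μ : Measure α} {f : ι → α → ℝ} {l : Filter ι} {g : α → ℝ} :
    TendstoInMeasure μ f l g ↔
      ∀ δ > 0, Tendsto (fun i => μ {x | δ < |f i x - g x|}) l (𝓝 0) := by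
  rw [tendstoInMeasure_iff_dist]
  simp only [Real.dist_eq]
  refine ⟨fun h δ hδ => ?_, fun h ε hε => ?_⟩
  · refine tendsto_of_tendsto_of_tendsto_of_le_of_le tendsto_const_nhds (h δ hδ)
      (fun _ => zero_le) fun i => measure_mono fun x (hx : δ < _) => hx.le
  · refine tendsto_of_tendsto_of_tendsto_of_le_of_le tendsto_const_nhds
      (h (ε / 2) (by positivity))
      (fun _ => zero_le) fun i => measure_mono fun x (hx : ε ≤ _) => ?_
    change ε / 2 < _
    linarith

theorem ProbabilityTheory.weak_law_real {Ω : Type*} {m : MeasurableSpace Ω} {μ : Measure Ω}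
    [IsFiniteMeasure μ] (X : ℕ → Ω → ℝ) (hint : Integrable (X 0) μ)
    (hindep : Pairwise fun i j => X i ⟂ᵢ[μ] X j)
    (hident : ∀ i, IdentDistrib (X i) (X 0) μ μ) :
    TendstoInMeasure μ (fun (n : ℕ) ω => (∑ i ∈ range n, X i ω) / n) atTop
      (fun _ => μ[X 0]) :=
  tendstoInMeasure_of_tendsto_ae
    (fun _ => ((aemeasurable_fun_sum _ fun i _ => (hident i).aemeasurable_fst).div_const _)
      |>.aestronglyMeasurable)
    (strong_law_ae_real X hint hindep hident)

lemma Finset.sum_Icc_one_eq_sum_range_succ {M : Type*} [AddCommMonoid M] (f : ℕ → M) (n : ℕ) :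
    ∑ j ∈ Icc 1 n, f j = ∑ i ∈ range n, f (i + 1) := by
  rw [range_eq_Ico, sum_Ico_add', zero_add, Ico_add_one_right_eq_Icc]

/-- the DiD estimator with one treated unit,
`τ̂_{N₀} = τ* + W₁ − (1/N₀) ∑_{j=2}^{N₀+1} W_j` (here `W 0` is the treated unit's error
and `W j`, `j ≥ 1`, are the i.i.d. mean-zero control errors), converges in probability
to `τ* + W₁`; in particular, if `P(W₁ = 0) < 1`, it is not consistent for `τ*`. -/
theorem stmt11 {Ω : Type*} [MeasureSpace Ω] [IsProbabilityMeasure (ℙ : Measure Ω)]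
    (τstar : ℝ) (W : ℕ → Ω → ℝ)
    (hmeas : ∀ j, Measurable (W j))
    -- the control errors (W_j)_{j ≥ 1} are i.i.d., integrable, with mean zero
    (hindep : iIndepFun
      (fun j => W (j + 1)) ℙ)
    (hident : ∀ j k : ℕ, Measure.map (W (j + 1)) ℙ = Measure.map (W (k + 1)) ℙ)
    (hint : ∀ j : ℕ, Integrable (W (j + 1)) ℙ)
    (hmean : ∀ j : ℕ, ∫ ω, W (j + 1) ω ∂ℙ = 0)
    (τhat : ℕ → Ω → ℝ)
    (hτ : ∀ N₀ ω, τhat N₀ ω =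
      τstar + W 0 ω - (1 / (N₀ : ℝ)) * ∑ j ∈ Finset.Icc 1 N₀, W j ω) :
    (∀ δ > (0 : ℝ),
      Tendsto (fun N₀ => ℙ {ω | δ < |τhat N₀ ω - (τstar + W 0 ω)|}) atTop (nhds 0))
    ∧ (ℙ {ω | W 0 ω = 0} < 1 →
        ¬ ∀ δ > (0 : ℝ),
          Tendsto (fun N₀ => ℙ {ω | δ < |τhat N₀ ω - τstar|}) atTop (nhds 0)) := by
  have hlaw : TendstoInMeasure ℙ (fun (n : ℕ) ω => (∑ i ∈ range n, W (i + 1) ω) / n) atTop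
      (fun _ => 0) := by
    simpa [hmean 0] using weak_law_real (μ := ℙ) (fun j => W (j + 1)) (hint 0)
      (fun i j hij => hindep.indepFun hij)
      (fun i => ⟨(hmeas _).aemeasurable, (hmeas _).aemeasurable, hident i 0⟩)
  have herror : ∀ N ω,
      |τhat N ω - (τstar + W 0 ω)| = |(∑ i ∈ range N, W (i + 1) ω) / N - 0| := by
    intro N ω
    rw [hτ, sum_Icc_one_eq_sum_range_succ, ← abs_neg]
    ring_nf
  have hτ_lim : TendstoInMeasure ℙ τhat atTop (fun ω => τstar + W 0 ω) := by
    rw [tendstoInMeasure_iff_lt_abs_sub] at hlaw ⊢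
    simpa only [herror] using hlaw
  refine ⟨tendstoInMeasure_iff_lt_abs_sub.mp hτ_lim, fun hW hconsistent => ?_⟩
  have hW_ae : ∀ᵐ ω ∂ℙ, W 0 ω = 0 := by
    filter_upwards [tendstoInMeasure_ae_unique hτ_lim
      (tendstoInMeasure_iff_lt_abs_sub.mpr hconsistent)] with ω hω
    simpa using hω
  have hW_meas : MeasurableSet {ω | W 0 ω = 0} := hmeas 0 (measurableSet_singleton 0)
  rw [ae_iff_measure_eq hW_meas.nullMeasurableSet, measure_univ] at hW_ae
  exact hW.ne hW_ae
end
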